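/- Spectral (Galerkin) gradients: Under the setting of the infinite-dimensional gradient theorem, let the depth-varying parameter be the truncated series θ(s) = Σ_{j=1}^m α_j ⊙ ψ_j(s), where ψ_1, …, ψ_m : [0,S] → ℝ^{n_θ} are fixed continuous basis functions, α_j ∈ ℝ^{n_θ} are coefficient vectors, and ⊙ is the componentwise (Hadamard) product. Suppose z : [0,S] × ℝ^{m·n_θ} → ℝ^{n_z} is continuously differentiable in (s,α), solves ∂z/∂s(s,α) = f(s, z(s,α), θ(s)) with z(0,α) = z₀ independent of α, and for each j and each coordinate k the partial derivative v_{j,k}(s) = ∂z(s,α)/∂(α_j)_k satisfies the variational equation v'_{j,k}(s) = (∂f/∂z) v_{j,k}(s) + (∂f/∂θ) e_k (ψ_j(s))_k with v_{j,k}(0) = 0 (e_k the k-th standard basis vector of ℝ^{n_θ}, all Jacobians evaluated at (s, z(s,α), θ(s))). Define ℓ(α) = L(z(S,α)) + ∫₀ᔆ l(τ, z(τ,α)) dτ and let a satisfy the adjoint final-value problem a'ᵀ = −aᵀ (∂f/∂z) − (∂l/∂z), a(S)ᵀ = (∂L/∂z)(z(S,α)). Then for every j and k, ∂ℓ/∂(α_j)_k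 = ∫₀ᔆ a(τ)ᵀ (∂f/∂θ)(τ, z(τ,α), θ(τ)) e_k (ψ_j(τ))_k dτ. -/

import Mathlib

/-!
By the chain rule and differentiation under the integral sign, the derivative of the loss in the
direction `(α_j)_k` is `Lz ⬝ᵥ v(S) + ∫₀ˢ lz ⬝ᵥ v`, where `v = ∂z/∂(α_j)_k`. Pairing the adjoint
equation with the variational equation, the `Fz`-terms cancel and
`(a ⬝ᵥ v)' = a ⬝ᵥ (Fθ e_k ψ_{j,k}) - lz ⬝ᵥ v`. Integrating over `[0, S]` with `v(0) = 0` and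
`a(S) = Lz` turns the derivative into the stated integral. Continuity of the partial Jacobians of
the `C¹` maps `f` and `l` makes all integrands integrable.
-/

open MeasureTheory Matrix

/-- The continuous linear map `w ↦ M *ᵥ w` given by a Jacobian matrix `M`. -/
noncomputable def mvCLM {m n : ℕ} (M : Matrix (Fin m) (Fin n) ℝ) :
    (Fin n → ℝ) →L[ℝ] (Fin m → ℝ) :=
  LinearMap.toContinuousLinearMap M.mulVecLin

/-- The continuous linear functional `w ↦ g ⬝ᵥ w` given by a gradient (row) vector `g`. -/
noncomputable def dotCLM {n : ℕ} (g : Fin n → ℝ) : (Fin n → ℝ) →L[ℝ] ℝ :=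
  LinearMap.toContinuousLinearMap
    { toFun := fun w => g ⬝ᵥ w
      map_add' := by intro x y; simp [dotProduct_add]
      map_smul' := by intro c x; simp [dotProduct_smul] }

/-- The standard basis direction `e_{j,k}` in the coefficient space `(ℝ^{nθ})^m`. -/
def coordDir {m n : ℕ} (j : Fin m) (k : Fin n) : Fin m → (Fin n → ℝ) :=
  Pi.single j (Pi.single k (1:ℝ))

open Set

theorem HasDerivAt.dotProduct {ι 𝕜 : Type*} [Fintype ι] [NontriviallyNormedField 𝕜]
    {A B : 𝕜 → ι → 𝕜} {A' B' : ι → 𝕜} {x : 𝕜}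
    (hA : HasDerivAt A A' x) (hB : HasDerivAt B B' x) :
    HasDerivAt (fun y => A y ⬝ᵥ B y) (A' ⬝ᵥ B x + A x ⬝ᵥ B') x := by
  simp only [_root_.dotProduct, ← Finset.sum_add_distrib]
  exact HasDerivAt.fun_sum fun i _ => (hasDerivAt_pi.1 hA i).mul (hasDerivAt_pi.1 hB i)

theorem ContinuousOn.dotProduct {X ι R : Type*} [TopologicalSpace X] [Fintype ι]
    [TopologicalSpace R] [Mul R] [AddCommMonoid R] [ContinuousAdd R] [ContinuousMul R]
    {A B : X → ι → R} {s : Set X} (hA : ContinuousOn A s) (hB : ContinuousOn B s) :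
    ContinuousOn (fun x => A x ⬝ᵥ B x) s := by
  simp only [_root_.dotProduct]
  fun_prop

theorem integral_dotProduct_forcing_eq_of_adjoint {ι : Type*} [Fintype ι]
    {a v b g : ℝ → ι → ℝ} {A : ℝ → Matrix ι ι ℝ} {s₀ s₁ : ℝ}
    (ha : ∀ s ∈ uIcc s₀ s₁, HasDerivAt a (-(a s ᵥ* A s) - g s) s)
    (hv : ∀ s ∈ uIcc s₀ s₁, HasDerivAt v (A s *ᵥ v s + b s) s)
    (hab : IntervalIntegrable (fun s => a s ⬝ᵥ b s) volume s₀ s₁)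
    (hgv : IntervalIntegrable (fun s => g s ⬝ᵥ v s) volume s₀ s₁) :
    ∫ s in s₀..s₁, a s ⬝ᵥ b s = a s₁ ⬝ᵥ v s₁ - a s₀ ⬝ᵥ v s₀ + ∫ s in s₀..s₁, g s ⬝ᵥ v s := by
  have hpair : ∀ s ∈ uIcc s₀ s₁,
      HasDerivAt (fun s => a s ⬝ᵥ v s) (a s ⬝ᵥ b s - g s ⬝ᵥ v s) s := by
    intro s hs
    refine ((ha s hs).dotProduct (hv s hs)).congr_deriv ?_
    simp only [sub_dotProduct, neg_dotProduct, dotProduct_add, dotProduct_mulVec]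
    ring
  rw [← intervalIntegral.integral_eq_sub_of_hasDerivAt hpair (hab.sub hgv),
    intervalIntegral.integral_sub hab hgv]
  ring

theorem ContDiff.continuousOn_of_hasFDerivAt_right {X E G F : Type*} [TopologicalSpace X]
    [NormedAddCommGroup E] [NormedSpace ℝ E] [NormedAddCommGroup G] [NormedSpace ℝ G]
    [NormedAddCommGroup F] [NormedSpace ℝ F]
    {Φ : E × G → F} (hΦ : ContDiff ℝ 1 Φ) {x : X → E} {y u : X → G} {D : X → G →L[ℝ] F}
    {s : Set X} (hx : ContinuousOn x s) (hy : ContinuousOn y s) (hu : ContinuousOn u s)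
    (hD : ∀ t ∈ s, HasFDerivAt (fun w => Φ (x t, w)) (D t) (y t)) :
    ContinuousOn (fun t => D t (u t)) s := by
  have hD_eq : ∀ t ∈ s, D t = (fderiv ℝ Φ (x t, y t)).comp (.inr ℝ E G) := fun t ht =>
    (hD t ht).unique
      ((hΦ.differentiable one_ne_zero _).hasFDerivAt.comp _ (hasFDerivAt_prodMk_right _ _))
  have hu' : ContinuousOn (fun t => ((0 : E), u t)) s := continuousOn_const.prodMk hu
  refine (((hΦ.continuous_fderiv one_ne_zero).comp_continuousOn (hx.prodMk hy)).clm_apply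
    hu').congr fun t ht => ?_
  simp [hD_eq t ht]

theorem intervalIntegral.hasDerivAt_integral_of_contDiff {E : Type*} [NormedAddCommGroup E]
    [NormedSpace ℝ E] {F : ℝ → ℝ → E} (hF : ContDiff ℝ 1 (Function.uncurry F)) (a b x₀ : ℝ) :
    HasDerivAt (fun x => ∫ τ in a..b, F x τ) (∫ τ in a..b, deriv (fun x => F x τ) x₀) x₀ := by
  set D : ℝ × ℝ → E := fun p => fderiv ℝ (Function.uncurry F) p (1, 0)
  have hD : Continuous D := (hF.continuous_fderiv one_ne_zero).clm_apply continuous_const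
  have hFD : ∀ x τ, HasDerivAt (fun x => F x τ) (D (x, τ)) x := fun x τ => by
    have := (hF.differentiable one_ne_zero (x, τ)).hasFDerivAt.comp_hasDerivAt x
      ((hasDerivAt_id x).prodMk (hasDerivAt_const x τ))
    exact this
  obtain ⟨C, hC⟩ := (isCompact_closedBall x₀ 1 |>.prod isCompact_uIcc).exists_bound_of_continuousOn
    hD.continuousOn
  have hF_cont : ∀ x, Continuous (F x) := fun x =>
    hF.continuous.comp (continuous_const.prodMk continuous_id)
  have := hasDerivAt_integral_of_dominated_loc_of_deriv_le (μ := volume) (bound := fun _ => C)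
    (Metric.closedBall_mem_nhds x₀ one_pos) (.of_forall fun x => (hF_cont x).aestronglyMeasurable)
    ((hF_cont x₀).intervalIntegrable a b)
    (hD.comp (continuous_const.prodMk continuous_id)).aestronglyMeasurable
    (.of_forall fun τ hτ x hx => hC (x, τ) ⟨hx, uIoc_subset_uIcc hτ⟩) intervalIntegrable_const
    (.of_forall fun τ _ x _ => hFD x τ)
  simpa only [(hFD x₀ _).deriv] using this.2

theorem spectral_galerkin_gradients_general
    {nz nθ : ℕ} (m : ℕ) {S : ℝ} (hS : 0 < S)
    (f : ℝ → (Fin nz → ℝ) → (Fin nθ → ℝ) → (Fin nz → ℝ))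
    (hf : ContDiff ℝ 1 (fun p : ℝ × (Fin nz → ℝ) × (Fin nθ → ℝ) => f p.1 p.2.1 p.2.2))
    -- basis functions and coefficients of the truncated series
    (ψ : Fin m → ℝ → (Fin nθ → ℝ)) (hψ : ∀ j, ContinuousOn (ψ j) (Set.Icc 0 S))
    (α : Fin m → (Fin nθ → ℝ))
    (θ : ℝ → (Fin nθ → ℝ))
    (hθ : ∀ s : ℝ, θ s = fun k => ∑ j : Fin m, α j k * ψ j s k)
    (z : ℝ → (Fin m → (Fin nθ → ℝ)) → (Fin nz → ℝ))
    (hz : ContDiff ℝ 1 (fun p : ℝ × (Fin m → (Fin nθ → ℝ)) => z p.1 p.2))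
    -- Jacobians of `f` along the solution
    (Fz : ℝ → Matrix (Fin nz) (Fin nz) ℝ) (Fθ : ℝ → Matrix (Fin nz) (Fin nθ) ℝ)
    (hFθ : ∀ s ∈ Set.Icc (0:ℝ) S, HasFDerivAt (fun p => f s (z s α) p) (mvCLM (Fθ s)) (θ s))
    -- partial derivatives `v j k (s) = ∂z(s,α)/∂(α_j)_k` satisfy the variational equations
    (v : Fin m → Fin nθ → ℝ → (Fin nz → ℝ))
    (hv : ∀ (j : Fin m) (k : Fin nθ), ∀ s ∈ Set.Icc (0:ℝ) S,
      HasDerivAt (fun t : ℝ => z s (α + t • coordDir j k)) (v j k s) 0)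
    (hvar : ∀ (j : Fin m) (k : Fin nθ), ∀ s ∈ Set.Icc (0:ℝ) S,
      HasDerivAt (v j k) (Fz s *ᵥ v j k s + Fθ s *ᵥ Pi.single k (ψ j s k)) s)
    (hv0 : ∀ (j : Fin m) (k : Fin nθ), v j k 0 = 0)
    -- loss functions and their gradients
    (L : (Fin nz → ℝ) → ℝ) (l : ℝ → (Fin nz → ℝ) → ℝ)
    (hl : ContDiff ℝ 1 (fun p : ℝ × (Fin nz → ℝ) => l p.1 p.2))
    (Lz : Fin nz → ℝ) (lz : ℝ → (Fin nz → ℝ))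
    (hLz : HasFDerivAt L (dotCLM Lz) (z S α))
    (hlz : ∀ s ∈ Set.Icc (0:ℝ) S, HasFDerivAt (fun w => l s w) (dotCLM (lz s)) (z s α))
    -- the adjoint state
    (a : ℝ → (Fin nz → ℝ))
    (ha : ∀ s ∈ Set.Icc (0:ℝ) S, HasDerivAt a (-(a s ᵥ* Fz s) - lz s) s)
    (haS : a S = Lz) :
    ∀ (j : Fin m) (k : Fin nθ),
      HasDerivAt
        (fun t : ℝ =>
          L (z S (α + t • coordDir j k)) +
            ∫ τ in (0:ℝ)..S, l τ (z τ (α + t • coordDir j k)))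
        (∫ τ in (0:ℝ)..S, a τ ⬝ᵥ (Fθ τ *ᵥ Pi.single k (ψ j τ k))) 0 := by
  intro j k
  have hIcc : uIcc 0 S = Icc 0 S := uIcc_of_le hS.le
  obtain rfl : θ = _ := funext hθ
  have hzc : Continuous fun s => z s α := hz.continuous.comp (continuous_id.prodMk continuous_const)
  have hvc : ContinuousOn (v j k) (Icc 0 S) := fun s hs =>
    (hvar j k s hs).continuousAt.continuousWithinAt
  have hac : ContinuousOn a (Icc 0 S) := fun s hs => (ha s hs).continuousAt.continuousWithinAt
  have hforcing : ContinuousOn (fun s => Fθ s *ᵥ Pi.single k (ψ j s k)) (Icc 0 S) :=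
    ContDiff.continuousOn_of_hasFDerivAt_right (Φ := fun p => f p.1.1 p.1.2 p.2)
      (hf.comp (contDiff_fst.fst.prodMk (contDiff_fst.snd.prodMk contDiff_snd)))
      (continuousOn_id.prodMk hzc.continuousOn) (by fun_prop)
      ((ContinuousLinearMap.single ℝ (fun _ => ℝ) k).continuous.comp_continuousOn
        ((continuous_apply k).comp_continuousOn (hψ j))) hFθ
  have hcost : ContinuousOn (fun s => lz s ⬝ᵥ v j k s) (Icc 0 S) :=
    ContDiff.continuousOn_of_hasFDerivAt_right hl continuousOn_id hzc.continuousOn hvc hlz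
  rw [← hIcc] at hac hforcing hcost ha hvar
  have hdual := integral_dotProduct_forcing_eq_of_adjoint ha (hvar j k)
    (hac.dotProduct hforcing).intervalIntegrable hcost.intervalIntegrable
  rw [hdual, haS, hv0, dotProduct_zero, sub_zero]
  have hterm : HasDerivAt (fun t : ℝ => L (z S (α + t • coordDir j k))) (Lz ⬝ᵥ v j k S) 0 :=
    hLz.comp_hasDerivAt_of_eq 0 (hv j k S ⟨hS.le, le_rfl⟩) (by simp)
  refine hterm.add ((intervalIntegral.hasDerivAt_integral_of_contDiff ?_ 0 S 0).congr_deriv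
    (intervalIntegral.integral_congr fun τ hτ => ?_))
  · exact hl.comp (contDiff_snd.prodMk (hz.comp (contDiff_snd.prodMk
      (contDiff_const.add (contDiff_fst.smul contDiff_const)))))
  · rw [hIcc] at hτ
    exact ((hlz τ hτ).comp_hasDerivAt_of_eq 0 (hv j k τ hτ) (by simp)).deriv

/-- **Spectral (Galerkin) gradients.**  With the depth-varying parameter given by the
truncated expansion `θ(s) = ∑ⱼ αⱼ ⊙ ψⱼ(s)` on fixed continuous basis functions `ψⱼ`, for
every coefficient coordinate `(α_j)_k` the partial derivative of the loss
`ℓ(α) = L(z(S,α)) + ∫₀ˢ l(τ, z(τ,α)) dτ` is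
`∂ℓ/∂(α_j)_k = ∫₀ˢ a(τ)ᵀ (∂f/∂θ)(τ, z(τ,α), θ(τ)) e_k (ψ_j(τ))_k dτ`. -/
theorem spectral_galerkin_gradients
    {nz nθ : ℕ} (m : ℕ) {S : ℝ} (hS : 0 < S)
    (f : ℝ → (Fin nz → ℝ) → (Fin nθ → ℝ) → (Fin nz → ℝ))
    (hf : ContDiff ℝ 1 (fun p : ℝ × (Fin nz → ℝ) × (Fin nθ → ℝ) => f p.1 p.2.1 p.2.2))
    -- basis functions and coefficients of the truncated series
    (ψ : Fin m → ℝ → (Fin nθ → ℝ)) (hψ : ∀ j, ContinuousOn (ψ j) (Set.Icc 0 S))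
    (α : Fin m → (Fin nθ → ℝ))
    (θ : ℝ → (Fin nθ → ℝ))
    (hθ : ∀ s : ℝ, θ s = fun k => ∑ j : Fin m, α j k * ψ j s k)
    (z : ℝ → (Fin m → (Fin nθ → ℝ)) → (Fin nz → ℝ)) (z₀ : Fin nz → ℝ)
    (hz : ContDiff ℝ 1 (fun p : ℝ × (Fin m → (Fin nθ → ℝ)) => z p.1 p.2))
    (hode : ∀ s ∈ Set.Icc (0:ℝ) S, HasDerivAt (fun u => z u α) (f s (z s α) (θ s)) s)
    (hinit : ∀ α' : Fin m → (Fin nθ → ℝ), z 0 α' = z₀)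
    -- Jacobians of `f` along the solution
    (Fz : ℝ → Matrix (Fin nz) (Fin nz) ℝ) (Fθ : ℝ → Matrix (Fin nz) (Fin nθ) ℝ)
    (hFz : ∀ s ∈ Set.Icc (0:ℝ) S, HasFDerivAt (fun w => f s w (θ s)) (mvCLM (Fz s)) (z s α))
    (hFθ : ∀ s ∈ Set.Icc (0:ℝ) S, HasFDerivAt (fun p => f s (z s α) p) (mvCLM (Fθ s)) (θ s))
    -- partial derivatives `v j k (s) = ∂z(s,α)/∂(α_j)_k` satisfy the variational equations
    (v : Fin m → Fin nθ → ℝ → (Fin nz → ℝ))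
    (hv : ∀ (j : Fin m) (k : Fin nθ), ∀ s ∈ Set.Icc (0:ℝ) S,
      HasDerivAt (fun t : ℝ => z s (α + t • coordDir j k)) (v j k s) 0)
    (hvar : ∀ (j : Fin m) (k : Fin nθ), ∀ s ∈ Set.Icc (0:ℝ) S,
      HasDerivAt (v j k) (Fz s *ᵥ v j k s + Fθ s *ᵥ Pi.single k (ψ j s k)) s)
    (hv0 : ∀ (j : Fin m) (k : Fin nθ), v j k 0 = 0)
    -- loss functions and their gradients
    (L : (Fin nz → ℝ) → ℝ) (l : ℝ → (Fin nz → ℝ) → ℝ)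
    (hL : ContDiff ℝ 1 L)
    (hl : ContDiff ℝ 1 (fun p : ℝ × (Fin nz → ℝ) => l p.1 p.2))
    (Lz : Fin nz → ℝ) (lz : ℝ → (Fin nz → ℝ))
    (hLz : HasFDerivAt L (dotCLM Lz) (z S α))
    (hlz : ∀ s ∈ Set.Icc (0:ℝ) S, HasFDerivAt (fun w => l s w) (dotCLM (lz s)) (z s α))
    -- the adjoint state
    (a : ℝ → (Fin nz → ℝ))
    (ha : ∀ s ∈ Set.Icc (0:ℝ) S, HasDerivAt a (-(a s ᵥ* Fz s) - lz s) s)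
    (haS : a S = Lz) :
    ∀ (j : Fin m) (k : Fin nθ),
      HasDerivAt
        (fun t : ℝ =>
          L (z S (α + t • coordDir j k)) +
            ∫ τ in (0:ℝ)..S, l τ (z τ (α + t • coordDir j k)))
        (∫ τ in (0:ℝ)..S, a τ ⬝ᵥ (Fθ τ *ᵥ Pi.single k (ψ j τ k))) 0 :=
  spectral_galerkin_gradients_general m hS f hf ψ hψ α θ hθ z hz Fz Fθ hFθ v hv hvar hv0 L l hl Lz
    lz hLz hlz a ha haS
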